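/- arXiv:1405.3577 — 8 statements merged into one kernel-verified Lean document; each statement's English description precedes it below -/
import Mathlib

section
/- Let F be a field of characteristic zero and let y₁, y₂, t ∈ F satisfy t³ = (y₁² − 1)(y₂² − 1), with y₁ ≠ 1, y₁ ≠ −1. Let c ∈ F satisfy c³ = 4. Set u = 2(y₂ + 1)/(y₁ − 1)², X = c·u(u − 1)t/(y₁² − 1), and Y = −u²(u − 1)(u·y₁ − u + 2)/(y₁ + 1). Then Y² = X³ + u⁵(u − 1)². (This is the Weierstrass form of Fibration 1, with singular fibers 2 II* + IV, on the singular K3 surface X₃.) -/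
/-- Weierstrass form of Fibration 1 (singular fibers `2 II* + IV`) on the
singular K3 surface `X₃` of discriminant 3, as a purely algebraic identity. -/
theorem fibration1_weierstrass_identity (F : Type*) [Field F] [CharZero F]
    (y₁ y₂ t c u X Y : F)
    (ht : t ^ 3 = (y₁ ^ 2 - 1) * (y₂ ^ 2 - 1))
    (hy₁ : y₁ ≠ 1) (hy₁' : y₁ ≠ -1)
    (hc : c ^ 3 = 4)
    (hu : u = 2 * (y₂ + 1) / (y₁ - 1) ^ 2)
    (hX : X = c * u * (u - 1) * t / (y₁ ^ 2 - 1))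
    (hY : Y = -(u ^ 2 * (u - 1) * (u * y₁ - u + 2)) / (y₁ + 1)) :
    Y ^ 2 = X ^ 3 + u ^ 5 * (u - 1) ^ 2 := by
  have h1 : y₁ - 1 ≠ 0 := sub_ne_zero.mpr hy₁
  have h2 : y₁ + 1 ≠ 0 := by
    intro h; exact hy₁' (by linear_combination h)
  have h3 : y₁ ^ 2 - 1 ≠ 0 := by
    have e : y₁ ^ 2 - 1 = (y₁ - 1) * (y₁ + 1) := by ring
    rw [e]; exact mul_ne_zero h1 h2
  -- cleared-denominator forms of the definitions
  have hu2 : u * (y₁ - 1) ^ 2 = 2 * (y₂ + 1) := by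
    rw [hu]; field_simp
  have hXe : X * (y₁ ^ 2 - 1) = c * u * (u - 1) * t := by
    rw [hX]; field_simp
  have hYe : Y * (y₁ + 1) = -(u ^ 2 * (u - 1) * (u * y₁ - u + 2)) := by
    rw [hY]; field_simp
  -- cube of hXe
  have hX3 : X ^ 3 * (y₁ ^ 2 - 1) ^ 3 = c ^ 3 * u ^ 3 * (u - 1) ^ 3 * t ^ 3 := by
    linear_combination ((X * (y₁ ^ 2 - 1)) ^ 2 + (X * (y₁ ^ 2 - 1)) * (c * u * (u - 1) * t)
      + (c * u * (u - 1) * t) ^ 2) * hXe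
  -- replace c^3 t^3
  have hX3' : X ^ 3 * (y₁ ^ 2 - 1) ^ 2 * (y₁ ^ 2 - 1)
      = (2 * u ^ 4 * (u - 1) ^ 3 * (y₂ - 1) * (y₁ - 1) ^ 2) * (y₁ ^ 2 - 1) := by
    linear_combination hX3 + u ^ 3 * (u - 1) ^ 3 * t ^ 3 * hc
      + 4 * u ^ 3 * (u - 1) ^ 3 * ht
      - 2 * u ^ 3 * (u - 1) ^ 3 * (y₂ - 1) * (y₁ ^ 2 - 1) * hu2
  have hX3'' : X ^ 3 * (y₁ ^ 2 - 1) ^ 2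
      = 2 * u ^ 4 * (u - 1) ^ 3 * (y₂ - 1) * (y₁ - 1) ^ 2 :=
    mul_right_cancel₀ h3 hX3'
  -- X^3 (y₁+1)^2 = 2 u^4 (u-1)^3 (y₂-1), after cancelling (y₁-1)^2
  have hs : (y₁ - 1) ^ 2 ≠ 0 := pow_ne_zero _ h1
  have hX4 : X ^ 3 * (y₁ + 1) ^ 2 = 2 * u ^ 4 * (u - 1) ^ 3 * (y₂ - 1) := by
    apply mul_right_cancel₀ hs
    linear_combination hX3''
  -- Y^2 (y₁+1)^2
  have hY2 : Y ^ 2 * (y₁ + 1) ^ 2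
      = u ^ 5 * (u - 1) ^ 2 * (y₁ + 1) ^ 2 + 2 * u ^ 4 * (u - 1) ^ 3 * (y₂ - 1) := by
    linear_combination (Y * (y₁ + 1) - u ^ 2 * (u - 1) * (u * y₁ - u + 2)) * hYe
      + u ^ 4 * (u - 1) ^ 3 * hu2
  -- conclude
  have hsq : (y₁ + 1) ^ 2 ≠ 0 := pow_ne_zero _ h2
  apply mul_right_cancel₀ hsq
  linear_combination hY2 - hX4
end

section
/- Let F be a field of characteristic zero and let y₁, y₂, t ∈ F satisfy t³ = (y₁² − 1)(y₂² − 1), with y₁ ≠ 1 and y₁ ≠ −1. Set u = t/(y₁² − 1), X = 2(y₂ + 1)/(y₁ − 1)², and Y = 4(u³(y₁ + 1)(y₁ − 1)² + y₂ + 1)/(y₁ − 1)³. Then Y² = X³ + 4u³X² − 4u³X. (This is the Weierstrass form of Fibration 3, with singular fibers III* + I₆* + 3I₁, on the singular K3 surface X₃.) -/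
/-!
Dividing the surface equation by `(y₁² - 1)³` and writing `u = t / (y₁² - 1)` gives the quartic
`y₂² - 1 = u³ (y₁² - 1)²` over `F(u)`. It has the rational point `(y₁, y₂) = (1, -1)`, and `X, Y`
is the standard change of variables sending that point to infinity, which puts the quartic in
Weierstrass form.
-/

theorem weierstrass_of_sq_sub_one_eq {F : Type*} [Field F] {w y₁ y₂ : F}
    (h : y₂ ^ 2 - 1 = w * (y₁ ^ 2 - 1) ^ 2) (hy₁ : y₁ ≠ 1) :
    (4 * (w * (y₁ + 1) * (y₁ - 1) ^ 2 + y₂ + 1) / (y₁ - 1) ^ 3) ^ 2 =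
      (2 * (y₂ + 1) / (y₁ - 1) ^ 2) ^ 3 + 4 * w * (2 * (y₂ + 1) / (y₁ - 1) ^ 2) ^ 2
        - 4 * w * (2 * (y₂ + 1) / (y₁ - 1) ^ 2) := by
  have : y₁ - 1 ≠ 0 := sub_ne_zero.mpr hy₁
  field_simp
  linear_combination (-8 * (y₂ + 1) - 16 * w * (y₁ - 1) ^ 2) * h

theorem sq_sub_one_eq_div_cube_mul {F : Type*} [Field F] {y₁ y₂ t : F}
    (ht : t ^ 3 = (y₁ ^ 2 - 1) * (y₂ ^ 2 - 1)) (hy : y₁ ^ 2 - 1 ≠ 0) :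
    y₂ ^ 2 - 1 = (t / (y₁ ^ 2 - 1)) ^ 3 * (y₁ ^ 2 - 1) ^ 2 := by
  field_simp
  linear_combination -ht

theorem fibration3_weierstrass_identity_general (F : Type*) [Field F]
    (y₁ y₂ t u X Y : F)
    (ht : t ^ 3 = (y₁ ^ 2 - 1) * (y₂ ^ 2 - 1))
    (hy₁ : y₁ ≠ 1) (hy₁' : y₁ ≠ -1)
    (hu : u = t / (y₁ ^ 2 - 1))
    (hX : X = 2 * (y₂ + 1) / (y₁ - 1) ^ 2)
    (hY : Y = 4 * (u ^ 3 * (y₁ + 1) * (y₁ - 1) ^ 2 + y₂ + 1) / (y₁ - 1) ^ 3) :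
    Y ^ 2 = X ^ 3 + 4 * u ^ 3 * X ^ 2 - 4 * u ^ 3 * X := by
  have hy₁_sq : y₁ ^ 2 - 1 ≠ 0 := sub_ne_zero.mpr (sq_ne_one_iff.mpr ⟨hy₁, hy₁'⟩)
  have hquartic : y₂ ^ 2 - 1 = u ^ 3 * (y₁ ^ 2 - 1) ^ 2 := hu ▸ sq_sub_one_eq_div_cube_mul ht hy₁_sq
  subst hX hY
  exact weierstrass_of_sq_sub_one_eq hquartic hy₁

/-- Weierstrass form of Fibration 3 (singular fibers `III* + I₆* + 3I₁`) on the
singular K3 surface `X₃` of discriminant 3, as a purely algebraic identity. -/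
theorem fibration3_weierstrass_identity (F : Type*) [Field F] [CharZero F]
    (y₁ y₂ t u X Y : F)
    (ht : t ^ 3 = (y₁ ^ 2 - 1) * (y₂ ^ 2 - 1))
    (hy₁ : y₁ ≠ 1) (hy₁' : y₁ ≠ -1)
    (hu : u = t / (y₁ ^ 2 - 1))
    (hX : X = 2 * (y₂ + 1) / (y₁ - 1) ^ 2)
    (hY : Y = 4 * (u ^ 3 * (y₁ + 1) * (y₁ - 1) ^ 2 + y₂ + 1) / (y₁ - 1) ^ 3) :
    Y ^ 2 = X ^ 3 + 4 * u ^ 3 * X ^ 2 - 4 * u ^ 3 * X :=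
  fibration3_weierstrass_identity_general F y₁ y₂ t u X Y ht hy₁ hy₁' hu hX hY
end

section
/- Let F be a field of characteristic zero and let y₁, y₂, t ∈ F satisfy t³ = (y₁² − 1)(y₂² − 1). Set u = y₁, X = (u² − 1)t, and Y = (u² − 1)²y₂. Then Y² = X³ + (u² − 1)⁴. (This is the Weierstrass form of Fibration 5, with singular fibers 3 IV*, on the singular K3 surface X₃.) -/
/-- Weierstrass form of Fibration 5 (singular fibers `3 IV*`) on the
singular K3 surface `X₃` of discriminant 3, as a purely algebraic identity. -/
theorem fibration5_weierstrass_identity (F : Type*) [Field F] [CharZero F]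
    (y₁ y₂ t u X Y : F)
    (ht : t ^ 3 = (y₁ ^ 2 - 1) * (y₂ ^ 2 - 1))
    (hu : u = y₁)
    (hX : X = (u ^ 2 - 1) * t)
    (hY : Y = (u ^ 2 - 1) ^ 2 * y₂) :
    Y ^ 2 = X ^ 3 + (u ^ 2 - 1) ^ 4 := by
  subst hu hX hY
  linear_combination (-(u ^ 2 - 1) ^ 3) * ht
end

section
/- Let F be a field of characteristic zero and let y₁, y₂, t ∈ F satisfy t³ = (y₁² − 1)(y₂² − 1), with y₂ ≠ 1. Set u = t, X = t³(y₂ + 1)/(y₂ − 1), and Y = 2t³y₁(y₂ + 1)/(y₂ − 1). Then Y² = X³ − 2(u³ − 2)X² + u⁶X. (This is the Weierstrass form of Fibration 6, with singular fibers I₃* + I₁₂ + 3I₁, on the singular K3 surface X₃.) -/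
/-! Since `Y = 2 y₁ X`, the Weierstrass equation is `X` times `(X - u³)² = 4 (y₁² - 1) X`, and
for `X = t³ (y₂ + 1) / (y₂ - 1)` the latter is the equation of `X₃` multiplied by
`4 t³ / (y₂ - 1)²`. -/

theorem weierstrass_eq_of_sq_sub_cube_eq {R : Type*} [CommRing R] {y₁ u X Y : R}
    (hY : Y = 2 * y₁ * X) (hX : (X - u ^ 3) ^ 2 = 4 * (y₁ ^ 2 - 1) * X) :
    Y ^ 2 = X ^ 3 - 2 * (u ^ 3 - 2) * X ^ 2 + u ^ 6 * X := by
  subst hY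
  linear_combination (-X) * hX

theorem sq_sub_cube_eq_of_cube_eq {F : Type*} [Field F] {y₁ y₂ t : F}
    (ht : t ^ 3 = (y₁ ^ 2 - 1) * (y₂ ^ 2 - 1)) (hy₂ : y₂ ≠ 1) :
    (t ^ 3 * (y₂ + 1) / (y₂ - 1) - t ^ 3) ^ 2 =
      4 * (y₁ ^ 2 - 1) * (t ^ 3 * (y₂ + 1) / (y₂ - 1)) := by
  have hd : y₂ - 1 ≠ 0 := sub_ne_zero.mpr hy₂
  field_simp
  linear_combination (4 * t ^ 3) * ht

theorem fibration6_weierstrass_identity_general (F : Type*) [Field F]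
    (y₁ y₂ t u X Y : F)
    (ht : t ^ 3 = (y₁ ^ 2 - 1) * (y₂ ^ 2 - 1))
    (hy₂ : y₂ ≠ 1)
    (hu : u = t)
    (hX : X = t ^ 3 * (y₂ + 1) / (y₂ - 1))
    (hY : Y = 2 * t ^ 3 * y₁ * (y₂ + 1) / (y₂ - 1)) :
    Y ^ 2 = X ^ 3 - 2 * (u ^ 3 - 2) * X ^ 2 + u ^ 6 * X := by
  subst hu hX
  refine weierstrass_eq_of_sq_sub_cube_eq ?_ (sq_sub_cube_eq_of_cube_eq ht hy₂)
  rw [hY]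
  ring

/-- Weierstrass form of Fibration 6 (singular fibers `I₃* + I₁₂ + 3I₁`) on the
singular K3 surface `X₃` of discriminant 3, as a purely algebraic identity. -/
theorem fibration6_weierstrass_identity (F : Type*) [Field F] [CharZero F]
    (y₁ y₂ t u X Y : F)
    (ht : t ^ 3 = (y₁ ^ 2 - 1) * (y₂ ^ 2 - 1))
    (hy₂ : y₂ ≠ 1)
    (hu : u = t)
    (hX : X = t ^ 3 * (y₂ + 1) / (y₂ - 1))
    (hY : Y = 2 * t ^ 3 * y₁ * (y₂ + 1) / (y₂ - 1)) :
    Y ^ 2 = X ^ 3 - 2 * (u ^ 3 - 2) * X ^ 2 + u ^ 6 * X :=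
  fibration6_weierstrass_identity_general F y₁ y₂ t u X Y ht hy₂ hu hX hY
end

section
/- Let F be a field of characteristic zero and let y₁, y₂, t ∈ F satisfy t³ = (y₁² − 1)(y₂² − 1), with y₁ ≠ 1, y₁ ≠ −1, y₂ ≠ −1 and t ≠ 0. Let u = t/(y₁² − 1), X = 2(y₂ + 1)/(y₁ − 1)², and Y = 4(u³(y₁ + 1)(y₁ − 1)² + y₂ + 1)/(y₁ − 1)³ be the elliptic parameter and Weierstrass coordinates of Fibration 3. Then the 2-neighbor elliptic parameter Y/(uX) satisfies Y/(uX) = 2(y₁ + y₂)/t; that is, it equals 2/u₄ where u₄ = t/(y₁ + y₂) is the elliptic parameter of Fibration 4. -/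
/-!
Write `u³ = t³/(y₁² - 1)³ = (y₂² - 1)/(y₁² - 1)²` using the surface equation. Substituted
into `Y`, the factor `y₂ - 1` of `y₂² - 1` combines with `y₁ + 1` into `y₁ + y₂`, and both
`Y` and `uX` become multiples of `(y₂ + 1)/((y₁ + 1)(y₁ - 1)³)`, which cancels in `Y/(uX)`.
Every denominator is nonzero because `t ≠ 0` forces both factors of `t³` to be nonzero.
-/

theorem ne_zero_and_ne_zero_of_pow_eq_mul {M₀ : Type*} [MonoidWithZero M₀] [NoZeroDivisors M₀]
    {t a b : M₀} {n : ℕ} (ht : t ^ n = a * b) (htne : t ≠ 0) : a ≠ 0 ∧ b ≠ 0 := by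
  have hab : a * b ≠ 0 := ht ▸ pow_ne_zero n htne
  exact ⟨left_ne_zero_of_mul hab, right_ne_zero_of_mul hab⟩

theorem add_one_ne_zero_and_sub_one_ne_zero {R : Type*} [Ring R] {a : R}
    (h : a ^ 2 - 1 ≠ 0) : a + 1 ≠ 0 ∧ a - 1 ≠ 0 := by
  rw [sq, mul_self_sub_one] at h
  exact ⟨left_ne_zero_of_mul h, right_ne_zero_of_mul h⟩

namespace Fibration3

variable {F : Type*} [Field F] {y₁ y₂ t u : F}

theorem cube_param_eq (ht : t ^ 3 = (y₁ ^ 2 - 1) * (y₂ ^ 2 - 1)) (hy₁ : y₁ ^ 2 - 1 ≠ 0)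
    (hu : u = t / (y₁ ^ 2 - 1)) : u ^ 3 = (y₂ ^ 2 - 1) / (y₁ ^ 2 - 1) ^ 2 := by
  rw [hu]
  field_simp
  linear_combination ht

theorem Y_eq (hy₁ : y₁ ^ 2 - 1 ≠ 0) (hu3 : u ^ 3 = (y₂ ^ 2 - 1) / (y₁ ^ 2 - 1) ^ 2) :
    4 * (u ^ 3 * (y₁ + 1) * (y₁ - 1) ^ 2 + y₂ + 1) / (y₁ - 1) ^ 3
      = 4 * (y₂ + 1) * (y₁ + y₂) / ((y₁ + 1) * (y₁ - 1) ^ 3) := by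
  obtain ⟨hp, hm⟩ := add_one_ne_zero_and_sub_one_ne_zero hy₁
  rw [hu3]
  field_simp
  ring

end Fibration3

theorem two_neighbor_fibration3_to_fibration4_general (F : Type*) [Field F] [CharZero F]
    (y₁ y₂ t u X Y u₄ : F)
    (ht : t ^ 3 = (y₁ ^ 2 - 1) * (y₂ ^ 2 - 1))
    (htne : t ≠ 0)
    (hu : u = t / (y₁ ^ 2 - 1))
    (hX : X = 2 * (y₂ + 1) / (y₁ - 1) ^ 2)
    (hY : Y = 4 * (u ^ 3 * (y₁ + 1) * (y₁ - 1) ^ 2 + y₂ + 1) / (y₁ - 1) ^ 3)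
    (hu₄ : u₄ = t / (y₁ + y₂)) :
    Y / (u * X) = 2 * (y₁ + y₂) / t ∧ Y / (u * X) = 2 / u₄ := by
  obtain ⟨hy₁, hy₂⟩ := ne_zero_and_ne_zero_of_pow_eq_mul ht htne
  obtain ⟨hy₁p, hy₁m⟩ := add_one_ne_zero_and_sub_one_ne_zero hy₁
  have hy₂p := (add_one_ne_zero_and_sub_one_ne_zero hy₂).1
  have hY' := hY.trans (Fibration3.Y_eq hy₁ (Fibration3.cube_param_eq ht hy₁ hu))
  have main : Y / (u * X) = 2 * (y₁ + y₂) / t := by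
    rw [hY', hX, hu]
    field_simp
    ring
  exact ⟨main, by rw [main, hu₄, div_div_eq_mul_div]⟩

/-- The 2-neighbor elliptic parameter `Y/(uX)` of Fibration 3 on the singular K3
surface `X₃` equals `2(y₁ + y₂)/t = 2/u₄`, where `u₄ = t/(y₁ + y₂)` is the
elliptic parameter of Fibration 4. -/
theorem two_neighbor_fibration3_to_fibration4 (F : Type*) [Field F] [CharZero F]
    (y₁ y₂ t u X Y u₄ : F)
    (ht : t ^ 3 = (y₁ ^ 2 - 1) * (y₂ ^ 2 - 1))
    (hy₁ : y₁ ≠ 1) (hy₁' : y₁ ≠ -1) (hy₂ : y₂ ≠ -1) (htne : t ≠ 0)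
    (hu : u = t / (y₁ ^ 2 - 1))
    (hX : X = 2 * (y₂ + 1) / (y₁ - 1) ^ 2)
    (hY : Y = 4 * (u ^ 3 * (y₁ + 1) * (y₁ - 1) ^ 2 + y₂ + 1) / (y₁ - 1) ^ 3)
    (hu₄ : u₄ = t / (y₁ + y₂)) :
    Y / (u * X) = 2 * (y₁ + y₂) / t ∧ Y / (u * X) = 2 / u₄ :=
  two_neighbor_fibration3_to_fibration4_general F y₁ y₂ t u X Y u₄ ht htne hu hX hY hu₄
end

section
/- Let E be the elliptic curve over ℂ(u) defined by Y² = X³ + (X − u⁶)². Then the points P = (2u³, u⁶ + 2u³) and Q = (−2u³, u⁶ − 2u³) lie on E, and in the group of ℂ(u)-rational points their sum is the 3-torsion point P + Q = (0, −u⁶). -/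
/-!
Write `t = u⁶ = s²`. The line `Y = X + t` meets `Y² = X³ + (X − t)²` where `X³ = 4tX`, i.e. at
`X = 0, ±2s`. So `P`, `Q` and `(0, t)` are collinear, and `P + Q = -(0, t) = (0, -t)`. The line
`Y = X − t` meets the curve only where `X³ = 0`: it is an inflectional tangent at `(0, -t)`,
which is therefore a point of order `3`.
-/

open WeierstrassCurve

/-- The parameter `u` of the base `ℙ¹`, as an element of `ℂ(u)`. -/
noncomputable def uu : RatFunc ℂ := RatFunc.X

/-- Fibration 4: the elliptic curve `Y² = X³ + (X − u⁶)²` over `ℂ(u)`,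
i.e. `Y² = X³ + X² − 2u⁶X + u¹²`. -/
noncomputable def W4 : WeierstrassCurve.Affine (RatFunc ℂ) :=
  { a₁ := 0, a₂ := 1, a₃ := 0, a₄ := -2 * uu ^ 6, a₆ := uu ^ 12 }

lemma self_ne_neg_of_ne_zero {R : Type*} [CommRing R] [NoZeroDivisors R] [NeZero (2 : R)]
    {a : R} (ha : a ≠ 0) : a ≠ -a := fun h =>
  mul_ne_zero two_ne_zero ha (by linear_combination h)

lemma addOrderOf_eq_three_of_add_self_eq_neg {G : Type*} [AddGroup G] {a : G}
    (h : a + a = -a) (ha : a ≠ 0) : addOrderOf a = 3 :=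
  addOrderOf_eq_prime (by rw [succ_nsmul, two_nsmul, h, neg_add_cancel]) ha

section CubeAddSq

open Affine Point

variable {F : Type*} [Field F]

/-- The curve `Y² = X³ + (X − t)²`. -/
def cubeAddSq (t : F) : Affine F :=
  { a₁ := 0, a₂ := 1, a₃ := 0, a₄ := -2 * t, a₆ := t ^ 2 }

lemma cubeAddSq_equation_iff {t x y : F} :
    (cubeAddSq t).Equation x y ↔ y ^ 2 = x ^ 3 + (x - t) ^ 2 := by
  rw [equation_iff]
  simp only [cubeAddSq]
  constructor <;> intro h <;> linear_combination h

lemma cubeAddSq_negY (t x y : F) : (cubeAddSq t).negY x y = -y := by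
  simp [negY, cubeAddSq]

lemma cubeAddSq_nonsingular [NeZero (2 : F)] {t x y : F} (h : y ^ 2 = x ^ 3 + (x - t) ^ 2)
    (hy : y ≠ 0) : (cubeAddSq t).Nonsingular x y := by
  rw [nonsingular_iff, ← negY, cubeAddSq_negY, cubeAddSq_equation_iff]
  exact ⟨h, Or.inr (by simpa using self_ne_neg_of_ne_zero hy)⟩

lemma cubeAddSq_add_of_mem_line [DecidableEq F] {t x₁ x₂ x₃ y₁ y₂ y₃ : F}
    {h₁ : (cubeAddSq t).Nonsingular x₁ y₁} {h₂ : (cubeAddSq t).Nonsingular x₂ y₂}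
    {h₃ : (cubeAddSq t).Nonsingular x₃ y₃} (hx : x₁ ≠ x₂)
    (hy₁ : y₁ = x₁ + t) (hy₂ : y₂ = x₂ + t) (hx₃ : x₁ + x₂ + x₃ = 0) (hy₃ : y₃ = -(x₃ + t)) :
    some _ _ h₁ + some _ _ h₂ = some _ _ h₃ := by
  have hslope : (cubeAddSq t).slope x₁ x₂ y₁ y₂ = 1 := by
    rw [slope_of_X_ne hx, div_eq_one_iff_eq (sub_ne_zero.mpr hx), hy₁, hy₂]
    ring
  rw [add_of_X_ne hx, some.injEq, addY, negAddY, cubeAddSq_negY, hslope]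
  simp only [addX, cubeAddSq]
  constructor
  · linear_combination -hx₃
  · linear_combination hx₃ - hy₁ - hy₃

lemma cubeAddSq_add_self [DecidableEq F] [NeZero (2 : F)] {t : F} (ht : t ≠ 0)
    {h : (cubeAddSq t).Nonsingular 0 (-t)} : some _ _ h + some _ _ h = -some _ _ h := by
  have hy : -t ≠ (cubeAddSq t).negY 0 (-t) := by
    rw [cubeAddSq_negY]
    exact self_ne_neg_of_ne_zero (neg_ne_zero.mpr ht)
  have hslope : (cubeAddSq t).slope 0 0 (-t) (-t) = 1 := by
    rw [slope_of_Y_ne rfl hy, div_eq_one_iff_eq (sub_ne_zero.mpr hy), cubeAddSq_negY]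
    simp only [cubeAddSq]
    ring
  rw [add_self_of_Y_ne hy, neg_some, some.injEq, addY, negAddY, cubeAddSq_negY, hslope]
  simp only [addX, cubeAddSq, negY]
  constructor <;> ring

theorem cubeAddSq_sum_of_sections [DecidableEq F] [NeZero (2 : F)] {s t : F} (hst : s ^ 2 = t)
    (hs : s ≠ 0) (hs_add : s + 2 ≠ 0) (hs_sub : s - 2 ≠ 0) :
    ∃ hP : (cubeAddSq t).Nonsingular (2 * s) (t + 2 * s),
      ∃ hQ : (cubeAddSq t).Nonsingular (-(2 * s)) (t - 2 * s),
        ∃ hR : (cubeAddSq t).Nonsingular 0 (-t),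
          some _ _ hP + some _ _ hQ = some _ _ hR ∧ addOrderOf (some _ _ hR) = 3 := by
  subst hst
  have ht : s ^ 2 ≠ 0 := pow_ne_zero 2 hs
  refine ⟨cubeAddSq_nonsingular (by ring) ?_, cubeAddSq_nonsingular (by ring) ?_,
    cubeAddSq_nonsingular (by ring) (neg_ne_zero.mpr ht), ?_, ?_⟩
  · exact fun h => mul_ne_zero hs hs_add (by linear_combination h)
  · exact fun h => mul_ne_zero hs hs_sub (by linear_combination h)
  · refine cubeAddSq_add_of_mem_line ?_ (by ring) (by ring) (by ring) (by ring)
    exact self_ne_neg_of_ne_zero (mul_ne_zero two_ne_zero hs)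
  · exact addOrderOf_eq_three_of_add_self_eq_neg (cubeAddSq_add_self ht) (some_ne_zero _)

end CubeAddSq

lemma RatFunc.X_pow_add_C_ne_zero {K : Type*} [Field K] {n : ℕ} (hn : 0 < n) (c : K) :
    (RatFunc.X : RatFunc K) ^ n + RatFunc.C c ≠ 0 := fun h =>
  RatFunc.transcendental_X ⟨_, Polynomial.X_pow_add_C_ne_zero hn c, by simpa using h⟩

lemma W4_eq_cubeAddSq : W4 = cubeAddSq (uu ^ 6) := by
  simp only [W4, cubeAddSq, ← pow_mul]

open Classical in
/-- The points `P = (2u³, u⁶ + 2u³)` and `Q = (−2u³, u⁶ − 2u³)` lie on the curve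
`Y² = X³ + (X − u⁶)²` over `ℂ(u)`, and their sum is the 3-torsion point `(0, −u⁶)`. -/
theorem fibration4_sum_of_sections :
    ∃ hP : W4.Nonsingular (2 * uu ^ 3) (uu ^ 6 + 2 * uu ^ 3),
      ∃ hQ : W4.Nonsingular (-(2 * uu ^ 3)) (uu ^ 6 - 2 * uu ^ 3),
        ∃ hR : W4.Nonsingular 0 (-(uu ^ 6)),
          WeierstrassCurve.Affine.Point.some _ _ hP + WeierstrassCurve.Affine.Point.some _ _ hQ =
            WeierstrassCurve.Affine.Point.some _ _ hR ∧
          addOrderOf (WeierstrassCurve.Affine.Point.some _ _ hR) = 3 := by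
  have hu_add (c : ℂ) : uu ^ 3 + RatFunc.C c ≠ 0 := RatFunc.X_pow_add_C_ne_zero three_pos c
  rw [W4_eq_cubeAddSq]
  refine cubeAddSq_sum_of_sections (by ring) (pow_ne_zero 3 RatFunc.X_ne_zero) ?_ ?_
  · simpa [map_ofNat] using hu_add 2
  · simpa [map_ofNat, sub_eq_add_neg] using hu_add (-2)
end

section
/- Let E be the elliptic curve over ℂ(u) defined by Y² = X³ + 4u³X² − 4u³X. Then the point P = (1, −1) lies on E and has infinite order in the group of ℂ(u)-rational points, i.e., n·P ≠ O for every nonzero integer n. -/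
open WeierstrassCurve

/-- Fibration 3: the elliptic curve `Y² = X³ + 4u³X² − 4u³X` over `ℂ(u)`. -/
noncomputable def W3 : WeierstrassCurve.Affine (RatFunc ℂ) :=
  { a₁ := 0, a₂ := 4 * uu ^ 3, a₃ := 0, a₄ := -(4 * uu ^ 3), a₆ := 0 }

/-!
Specialise at `u = 0`, where the curve degenerates to the cusp `Y² = X³`. Its smooth points
`(t⁻², t⁻³)` form a group isomorphic to `(ℂ, +)` via `t`, three of them being collinear exactly
when their parameters add up to `0`. The chord-tangent formulas for `W3` reduce to those of the
cusp as long as no denominator vanishes at `u = 0`, so `P = (1, -1)`, with parameter `-1`, has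
multiples `n • P` that reduce to the parameter `-n`; in particular none of them is `O`.
-/

open Polynomial

namespace RatFunc

variable {K : Type*} [Field K] {f g : RatFunc K} {a c d : K}

/-- `f` is regular at `a` with value `c` (`RatFunc.eval` alone returns `0` at a pole). -/
def HasValueAt (f : RatFunc K) (a c : K) : Prop :=
  f.denom.eval a ≠ 0 ∧ f.eval (RingHom.id K) a = c

namespace HasValueAt

theorem trans_eq (hf : f.HasValueAt a c) (h : c = d) : f.HasValueAt a d := h ▸ hf

theorem unique (hc : f.HasValueAt a c) (hd : f.HasValueAt a d) : c = d := hc.2.symm.trans hd.2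

theorem add (hf : f.HasValueAt a c) (hg : g.HasValueAt a d) : (f + g).HasValueAt a (c + d) :=
  ⟨fun h ↦ mul_ne_zero hf.1 hg.1 <| by
      simpa using eval_eq_zero_of_dvd_of_eval_eq_zero (denom_add_dvd f g) h,
    by rw [eval_add _ _ hf.1 hg.1, hf.2, hg.2]⟩

theorem mul (hf : f.HasValueAt a c) (hg : g.HasValueAt a d) : (f * g).HasValueAt a (c * d) :=
  ⟨fun h ↦ mul_ne_zero hf.1 hg.1 <| by
      simpa using eval_eq_zero_of_dvd_of_eval_eq_zero (denom_mul_dvd f g) h,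
    by rw [eval_mul _ _ hf.1 hg.1, hf.2, hg.2]⟩

end HasValueAt

theorem hasValueAt_C (a c : K) : (C c).HasValueAt a c := by
  simp [HasValueAt, denom_C]

theorem hasValueAt_zero (a : K) : (0 : RatFunc K).HasValueAt a 0 := by
  simpa using hasValueAt_C a (0 : K)

theorem hasValueAt_one (a : K) : (1 : RatFunc K).HasValueAt a 1 := by
  simpa using hasValueAt_C a (1 : K)

theorem hasValueAt_ofNat (a : K) (n : ℕ) [n.AtLeastTwo] :
    (ofNat(n) : RatFunc K).HasValueAt a ofNat(n) := by
  simpa only [map_ofNat] using hasValueAt_C a (ofNat(n) : K)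

theorem hasValueAt_X (a : K) : (X : RatFunc K).HasValueAt a a := by
  simp [HasValueAt]

namespace HasValueAt

theorem neg (hf : f.HasValueAt a c) : (-f).HasValueAt a (-c) := by
  simpa using (hasValueAt_C a (-1)).mul hf

theorem sub (hf : f.HasValueAt a c) (hg : g.HasValueAt a d) : (f - g).HasValueAt a (c - d) := by
  simpa [sub_eq_add_neg] using hf.add hg.neg

theorem pow (hf : f.HasValueAt a c) (n : ℕ) : (f ^ n).HasValueAt a (c ^ n) := by
  induction n with
  | zero => simpa using hasValueAt_one a
  | succ n ih => simpa [pow_succ] using ih.mul hf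

theorem inv (hf : f.HasValueAt a c) (hc : c ≠ 0) : f⁻¹.HasValueAt a c⁻¹ := by
  have hf0 : f ≠ 0 := by rintro rfl; exact hc (by simpa [HasValueAt] using hf.2.symm)
  have hnum : f.num.eval a ≠ 0 := by
    intro h
    exact hc (by rw [← hf.2, RatFunc.eval, eval₂_id, h, zero_div])
  have hreg : f⁻¹.denom.eval a ≠ 0 :=
    fun h ↦ hnum (eval_eq_zero_of_dvd_of_eval_eq_zero (denom_inv_dvd hf0) h)
  refine ⟨hreg, eq_inv_of_mul_eq_one_left ?_⟩
  rw [← hf.2, ← eval_mul _ _ hreg hf.1, inv_mul_cancel₀ hf0, eval_one]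

theorem div (hf : f.HasValueAt a c) (hg : g.HasValueAt a d) (hd : d ≠ 0) :
    (f / g).HasValueAt a (c / d) := by
  simpa [div_eq_mul_inv] using hf.mul (hg.inv hd)

end HasValueAt

end RatFunc

section Cusp

variable {K : Type*} [Field K] {s t : K}

/-- The slope of the line through the points of the cusp `Y² = X³` with parameters `s` and `t`. -/
def cuspSlope (s t : K) : K := (s ^ 2 + s * t + t ^ 2) / (s * t * (s + t))

theorem cuspSlope_eq_chord (hs : s ≠ 0) (ht : t ≠ 0) (hst : s ^ 2 ≠ t ^ 2) :
    (s⁻¹ ^ 3 - t⁻¹ ^ 3) / (s⁻¹ ^ 2 - t⁻¹ ^ 2) = cuspSlope s t := by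
  have hst' : s + t ≠ 0 := fun h ↦ hst (by rw [eq_neg_of_add_eq_zero_left h]; ring)
  have hden : s⁻¹ ^ 2 - t⁻¹ ^ 2 ≠ 0 := by
    rwa [sub_ne_zero, inv_pow, inv_pow, Ne, inv_inj]
  rw [cuspSlope, div_eq_div_iff hden (mul_ne_zero (mul_ne_zero hs ht) hst')]
  field_simp
  ring

theorem cuspSlope_self_eq_tangent (h2 : (2 : K) ≠ 0) (hs : s ≠ 0) :
    3 * (s⁻¹ ^ 2) ^ 2 / (2 * s⁻¹ ^ 3) = cuspSlope s s := by
  rw [cuspSlope, div_eq_div_iff (mul_ne_zero h2 (by positivity)) (by simp [hs, ← two_mul, h2])]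
  field_simp
  ring

theorem cuspSlope_sq_sub (hs : s ≠ 0) (ht : t ≠ 0) (hst : s + t ≠ 0) :
    cuspSlope s t ^ 2 - s⁻¹ ^ 2 - t⁻¹ ^ 2 = (s + t)⁻¹ ^ 2 := by
  rw [cuspSlope]
  field_simp
  ring

theorem neg_cuspSlope_mul_add (hs : s ≠ 0) (ht : t ≠ 0) (hst : s + t ≠ 0) :
    -(cuspSlope s t * ((s + t)⁻¹ ^ 2 - s⁻¹ ^ 2) + s⁻¹ ^ 3) = (s + t)⁻¹ ^ 3 := by
  rw [cuspSlope]
  field_simp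
  ring

end Cusp

namespace WeierstrassCurve.Affine

open RatFunc

variable {K : Type*} [Field K] {W : Affine (RatFunc K)} {a : K}

/-- The fibre of `W` at `a` is the cusp `Y² = X³`. -/
structure HasCuspidalFibreAt (W : Affine (RatFunc K)) (a : K) : Prop where
  a₁ : W.a₁.HasValueAt a 0
  a₂ : W.a₂.HasValueAt a 0
  a₃ : W.a₃.HasValueAt a 0
  a₄ : W.a₄.HasValueAt a 0
  a₆ : W.a₆.HasValueAt a 0

namespace HasCuspidalFibreAt

variable {x₁ x₂ y₁ ℓ : RatFunc K} {c₁ c₂ d₁ l : K}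

theorem hasValueAt_negY (hW : W.HasCuspidalFibreAt a) (hx : x₁.HasValueAt a c₁)
    (hy : y₁.HasValueAt a d₁) : (W.negY x₁ y₁).HasValueAt a (-d₁) :=
  ((hy.neg.sub (hW.a₁.mul hx)).sub hW.a₃).trans_eq (by ring)

theorem hasValueAt_addX (hW : W.HasCuspidalFibreAt a) (hx₁ : x₁.HasValueAt a c₁)
    (hx₂ : x₂.HasValueAt a c₂) (hℓ : ℓ.HasValueAt a l) :
    (W.addX x₁ x₂ ℓ).HasValueAt a (l ^ 2 - c₁ - c₂) :=
  ((((hℓ.pow 2).add (hW.a₁.mul hℓ)).sub hW.a₂).sub hx₁ |>.sub hx₂).trans_eq (by ring)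

theorem hasValueAt_addY (hW : W.HasCuspidalFibreAt a) (hx₁ : x₁.HasValueAt a c₁)
    (hx₂ : x₂.HasValueAt a c₂) (hy₁ : y₁.HasValueAt a d₁) (hℓ : ℓ.HasValueAt a l) :
    (W.addY x₁ x₂ y₁ ℓ).HasValueAt a (-(l * (l ^ 2 - c₁ - c₂ - c₁) + d₁)) :=
  hW.hasValueAt_negY (hW.hasValueAt_addX hx₁ hx₂ hℓ)
    ((hℓ.mul ((hW.hasValueAt_addX hx₁ hx₂ hℓ).sub hx₁)).add hy₁)

end HasCuspidalFibreAt

open scoped Classical in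
/-- `P` specialises at `a` to the point `(t⁻², t⁻³)` of the cusp `Y² = X³`. -/
def ReducesToCuspAt (a : K) (P : W.Point) (t : K) : Prop :=
  ∃ x y, ∃ h : W.Nonsingular x y,
    P = .some x y h ∧ x.HasValueAt a (t⁻¹ ^ 2) ∧ y.HasValueAt a (t⁻¹ ^ 3)

namespace ReducesToCuspAt

open scoped Classical

variable {P Q : W.Point} {s t : K}

theorem ne_zero (hP : ReducesToCuspAt a P t) : P ≠ 0 := by
  obtain ⟨x, y, h, rfl, -⟩ := hP
  exact Point.some_ne_zero h

theorem some_add_some (hW : W.HasCuspidalFibreAt a) {x₁ x₂ y₁ y₂ : RatFunc K}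
    {h₁ : W.Nonsingular x₁ y₁} {h₂ : W.Nonsingular x₂ y₂} (hxy : ¬(x₁ = x₂ ∧ y₁ = W.negY x₂ y₂))
    (hs : s ≠ 0) (ht : t ≠ 0) (hst : s + t ≠ 0) (hx₁ : x₁.HasValueAt a (s⁻¹ ^ 2))
    (hy₁ : y₁.HasValueAt a (s⁻¹ ^ 3)) (hx₂ : x₂.HasValueAt a (t⁻¹ ^ 2))
    (hℓ : (W.slope x₁ x₂ y₁ y₂).HasValueAt a (cuspSlope s t)) :
    ReducesToCuspAt a (.some x₁ y₁ h₁ + .some x₂ y₂ h₂) (s + t) := by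
  rw [Point.add_some hxy]
  refine ⟨_, _, _, rfl, ?_, ?_⟩
  · exact (hW.hasValueAt_addX hx₁ hx₂ hℓ).trans_eq (cuspSlope_sq_sub hs ht hst)
  · refine (hW.hasValueAt_addY hx₁ hx₂ hy₁ hℓ).trans_eq ?_
    rw [cuspSlope_sq_sub hs ht hst, neg_cuspSlope_mul_add hs ht hst]

theorem add (hW : W.HasCuspidalFibreAt a) (hP : ReducesToCuspAt a P s)
    (hQ : ReducesToCuspAt a Q t) (hs : s ≠ 0) (ht : t ≠ 0) (hst : s ^ 2 ≠ t ^ 2) :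
    ReducesToCuspAt a (P + Q) (s + t) := by
  obtain ⟨x₁, y₁, h₁, rfl, hx₁, hy₁⟩ := hP
  obtain ⟨x₂, y₂, h₂, rfl, hx₂, hy₂⟩ := hQ
  have hc : s⁻¹ ^ 2 ≠ t⁻¹ ^ 2 := by rwa [inv_pow, inv_pow, Ne, inv_inj]
  have hx : x₁ ≠ x₂ := fun h ↦ hc (hx₁.unique (h ▸ hx₂))
  refine some_add_some hW (fun h ↦ hx h.1) hs ht
    (fun h ↦ hst (by rw [eq_neg_of_add_eq_zero_left h]; ring)) hx₁ hy₁ hx₂ ?_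
  rw [slope_of_X_ne hx]
  exact ((hy₁.sub hy₂).div (hx₁.sub hx₂) (sub_ne_zero.mpr hc)).trans_eq
    (cuspSlope_eq_chord hs ht hst)

theorem add_self (hW : W.HasCuspidalFibreAt a) (hP : ReducesToCuspAt a P s) (h2 : (2 : K) ≠ 0)
    (hs : s ≠ 0) : ReducesToCuspAt a (P + P) (s + s) := by
  obtain ⟨x, y, h, rfl, hx, hy⟩ := hP
  have hd : s⁻¹ ^ 3 - -s⁻¹ ^ 3 ≠ 0 := by
    rw [sub_neg_eq_add, ← two_mul]
    exact mul_ne_zero h2 (by positivity)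
  have hy' : y ≠ W.negY x y :=
    fun h ↦ hd (sub_eq_zero.mpr (hy.unique (h ▸ hW.hasValueAt_negY hx hy)))
  refine some_add_some hW (fun h ↦ hy' h.2) hs hs (by rw [← two_mul]; exact mul_ne_zero h2 hs)
    hx hy hx ?_
  rw [slope_of_Y_ne rfl hy']
  refine ((((((hasValueAt_ofNat a 3).mul (hx.pow 2)).add (((hasValueAt_ofNat a 2).mul hW.a₂).mul
    hx)).add hW.a₄).sub (hW.a₁.mul hy)).div (hy.sub (hW.hasValueAt_negY hx hy)) hd).trans_eq ?_
  rw [← cuspSlope_self_eq_tangent h2 hs]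
  ring

theorem nsmul [CharZero K] (hW : W.HasCuspidalFibreAt a) (hP : ReducesToCuspAt a P t)
    (ht : t ≠ 0) (n : ℕ) : ReducesToCuspAt a ((n + 1) • P) ((n + 1) * t) := by
  induction n with
  | zero => simpa using hP
  | succ n ih =>
    rw [succ_nsmul]
    rcases n with _ | n
    · rw [zero_add, one_nsmul]
      convert hP.add_self hW two_ne_zero ht using 1
      push_cast; ring
    · have hn : ((n : K) + 2) ^ 2 ≠ 1 := by
        norm_cast
        exact (Nat.one_lt_pow two_ne_zero (by omega)).ne'
      convert ih.add hW hP (mul_ne_zero (Nat.cast_add_one_ne_zero _) ht) ht ?_ using 1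
      · push_cast; ring
      · push_cast
        rw [add_assoc, one_add_one_eq_two, mul_pow, Ne, mul_left_eq_self₀]
        simp [hn, ht]

end ReducesToCuspAt

end WeierstrassCurve.Affine

open WeierstrassCurve.Affine RatFunc

theorem W3_hasCuspidalFibreAt_zero : W3.HasCuspidalFibreAt 0 where
  a₁ := hasValueAt_zero 0
  a₂ := ((hasValueAt_ofNat 0 4).mul ((hasValueAt_X 0).pow 3)).trans_eq (by norm_num)
  a₃ := hasValueAt_zero 0
  a₄ := ((hasValueAt_ofNat 0 4).mul ((hasValueAt_X 0).pow 3)).neg.trans_eq (by norm_num)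
  a₆ := hasValueAt_zero 0

theorem W3_nonsingular_one_neg_one : W3.Nonsingular 1 (-1) := by
  rw [nonsingular_iff, equation_iff]
  refine ⟨by simp [W3], Or.inr ?_⟩
  norm_num [W3]

theorem W3_reducesToCuspAt_zero :
    ReducesToCuspAt 0 (.some 1 (-1) W3_nonsingular_one_neg_one) (-1) :=
  ⟨1, -1, _, rfl, (hasValueAt_one 0).trans_eq (by norm_num),
    (hasValueAt_one 0).neg.trans_eq (by norm_num)⟩

open scoped Classical in
/-- The point `P = (1, −1)` lies on the curve `Y² = X³ + 4u³X² − 4u³X`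
over `ℂ(u)` and has infinite order in the group of `ℂ(u)`-rational points. -/
theorem fibration3_section_of_infinite_order :
    ∃ hP : W3.Nonsingular 1 (-1),
      ∀ n : ℤ, n ≠ 0 → n • WeierstrassCurve.Affine.Point.some _ _ hP ≠ 0 := by
  refine ⟨W3_nonsingular_one_neg_one, fun n hn ↦ ?_⟩
  obtain ⟨m, hm⟩ := Nat.exists_eq_add_one_of_ne_zero (Int.natAbs_ne_zero.mpr hn)
  rw [Ne, ← natAbs_nsmul_eq_zero, hm]
  exact (W3_reducesToCuspAt_zero.nsmul W3_hasCuspidalFibreAt_zero (by norm_num) m).ne_zero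
end

section
/- Let E be the elliptic curve over ℂ(u) defined by Y² = X³ + u⁵(u − 1)². Then the group of ℂ(u)-rational points of E is trivial: the point at infinity O is the only ℂ(u)-rational point. (Equivalently, the Mordell-Weil group of Fibration 1 on the singular K3 surface X₃ is 0.) -/
open WeierstrassCurve

/-- Fibration 1: the elliptic curve `Y² = X³ + u⁵(u − 1)²` over `ℂ(u)`. -/
noncomputable def W1 : WeierstrassCurve.Affine (RatFunc ℂ) :=
  { a₁ := 0, a₂ := 0, a₃ := 0, a₄ := 0, a₆ := uu ^ 5 * (uu - 1) ^ 2 }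

/-!
Since `ℂ[u]` is integrally closed, an affine point `(x, y)` can be written `x = p / B²`,
`y = r / B³` with `p, B` coprime polynomials, and then `r² = p³ + u⁵(u − 1)² B⁶`.
Comparing degrees (the last term has degree `6 deg B + 7`, neither even nor divisible by 3)
gives `2 deg r = 3 deg p > 6 deg B + 7`; the `u`-adic valuation `5` of the last term rules out
`u ∣ p`. After cancelling a common factor `(u − 1)²` if there is one, the three terms are
coprime and the Mason–Stothers theorem bounds `deg p` by the degree of the radical
`u (u − 1) p B r`, which is too small.
-/

open Polynomial UniqueFactorizationMonoid UniqueFactorizationDomain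

theorem exists_sq_eq_of_cube_eq_sq {R : Type*} [CommRing R] [IsDomain R] [IsIntegrallyClosed R]
    {a b : R} (h : a ^ 3 = b ^ 2) : ∃ t, t ^ 2 = a := by
  rcases eq_or_ne a 0 with rfl | ha
  · exact ⟨0, zero_pow two_ne_zero⟩
  set K := FractionRing R
  have ha' : algebraMap R K a ≠ 0 := (map_ne_zero_iff _ (IsFractionRing.injective R K)).mpr ha
  set x := algebraMap R K b / algebraMap R K a
  have hx : x ^ 2 = algebraMap R K a := by
    rw [div_pow, div_eq_iff (pow_ne_zero 2 ha'), ← map_pow, ← h, map_pow]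
    ring
  obtain ⟨t, ht⟩ := IsIntegrallyClosed.isIntegral_iff (x := x) |>.mp
    ⟨X ^ 2 - C a, monic_X_pow_sub_C _ two_ne_zero, by simp [hx]⟩
  exact ⟨t, IsFractionRing.injective R K (by rw [map_pow, ht, hx])⟩

namespace RatFunc

variable {K : Type*} [Field K] {x y : RatFunc K} {c : K[X]}

theorem num_sq_eq_cube_add_of_sq_eq_cube_add (h : y ^ 2 = x ^ 3 + algebraMap K[X] (RatFunc K) c) :
    x.denom ^ 3 = y.denom ^ 2 ∧ y.num ^ 2 = x.num ^ 3 + c * x.denom ^ 3 := by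
  have hpoly : y.num ^ 2 * x.denom ^ 3 = y.denom ^ 2 * (x.num ^ 3 + c * x.denom ^ 3) := by
    apply algebraMap_injective K
    rw [← num_div_denom x, ← num_div_denom y] at h
    have hx := algebraMap_ne_zero x.denom_ne_zero
    have hy := algebraMap_ne_zero y.denom_ne_zero
    field_simp at h
    simp only [map_mul, map_pow, map_add]
    linear_combination h
  have h₁ : y.denom ^ 2 ∣ x.denom ^ 3 :=
    (y.isCoprime_num_denom.symm.pow (m := 2) (n := 2)).dvd_of_dvd_mul_left ⟨_, hpoly⟩
  have h₂ : x.denom ^ 3 ∣ y.denom ^ 2 :=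
    (x.isCoprime_num_denom.symm.pow (m := 3) (n := 3)).dvd_of_dvd_mul_left
      ⟨y.num ^ 2 - c * y.denom ^ 2, by linear_combination -hpoly⟩
  have hden : x.denom ^ 3 = y.denom ^ 2 :=
    eq_of_monic_of_associated (x.monic_denom.pow 3) (y.monic_denom.pow 2)
      (associated_of_dvd_dvd h₂ h₁)
  refine ⟨hden, mul_left_cancel₀ (pow_ne_zero 3 x.denom_ne_zero) ?_⟩
  rw [← hden] at hpoly
  linear_combination hpoly

theorem exists_coprime_of_sq_eq_cube_add (h : y ^ 2 = x ^ 3 + algebraMap K[X] (RatFunc K) c) :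
    ∃ p B r : K[X], B ≠ 0 ∧ IsCoprime p B ∧ r ^ 2 = p ^ 3 + c * B ^ 6 := by
  obtain ⟨hden, hnum⟩ := num_sq_eq_cube_add_of_sq_eq_cube_add h
  obtain ⟨B, hB⟩ := exists_sq_eq_of_cube_eq_sq hden
  refine ⟨x.num, B, y.num, ?_, ?_, by rw [hnum, ← hB]; ring⟩
  · rintro rfl
    exact x.denom_ne_zero (by rw [← hB]; ring)
  · exact x.isCoprime_num_denom.of_isCoprime_of_dvd_right (hB ▸ dvd_pow_self B two_ne_zero)

end RatFunc

theorem Prime.dvd_of_sq_eq_cube_add_pow_five_mul {R : Type*} [CommRing R] [IsDomain R]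
    {π p r a : R} (hπ : Prime π) (h : r ^ 2 = p ^ 3 + π ^ 5 * a) (hp : π ∣ p) : π ∣ a := by
  have hπ0 := hπ.ne_zero
  obtain ⟨p₁, rfl⟩ := hp
  obtain ⟨r₁, rfl⟩ : π ∣ r :=
    hπ.dvd_of_dvd_pow (n := 2) ⟨π ^ 2 * p₁ ^ 3 + π ^ 4 * a, by linear_combination h⟩
  have h₁ : r₁ ^ 2 = π * p₁ ^ 3 + π ^ 3 * a :=
    mul_left_cancel₀ (pow_ne_zero 2 hπ0) (by linear_combination h)
  obtain ⟨r₂, rfl⟩ : π ∣ r₁ :=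
    hπ.dvd_of_dvd_pow (n := 2) ⟨p₁ ^ 3 + π ^ 2 * a, by linear_combination h₁⟩
  have h₂ : π * r₂ ^ 2 = p₁ ^ 3 + π ^ 2 * a :=
    mul_left_cancel₀ hπ0 (by linear_combination h₁)
  obtain ⟨p₂, rfl⟩ : π ∣ p₁ :=
    hπ.dvd_of_dvd_pow (n := 3) ⟨r₂ ^ 2 - π * a, by linear_combination -h₂⟩
  have h₃ : r₂ ^ 2 = π ^ 2 * p₂ ^ 3 + π * a :=
    mul_left_cancel₀ hπ0 (by linear_combination h₂)
  obtain ⟨r₃, rfl⟩ : π ∣ r₂ :=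
    hπ.dvd_of_dvd_pow (n := 2) ⟨π * p₂ ^ 3 + a, by linear_combination h₃⟩
  exact ⟨r₃ ^ 2 - p₂ ^ 3, mul_left_cancel₀ hπ0 (by linear_combination -h₃)⟩

namespace Polynomial

theorem natDegree_lt_of_add_eq_of_dvd_pow {k : Type*} [Field k] [CharZero k]
    {a b c M : k[X]} {n : ℕ} (ha : a ≠ 0) (hc : c ≠ 0) (hM : M ≠ 0) (hb : 0 < b.natDegree)
    (hab : IsCoprime a b) (hsum : a + b = c) (hdvd : a * b * c ∣ M ^ n) :
    a.natDegree < M.natDegree := by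
  classical
  have hb0 : b ≠ 0 := ne_zero_of_natDegree_gt hb
  have hrad : radical (a * b * -c) ∣ M := by
    rw [mul_neg, radical_neg]
    exact (exists_dvd_pow_iff_radical_dvd (mul_ne_zero (mul_ne_zero ha hb0) hc)).mp ⟨n, hdvd⟩
  rcases Polynomial.abc ha hb0 (neg_ne_zero.mpr hc) hab (by rw [hsum, add_neg_cancel]) with
    ⟨hlt, -, -⟩ | ⟨-, hb', -⟩
  · exact Nat.lt_of_succ_le (hlt.trans (natDegree_le_of_dvd hrad hM))
  · exact absurd (derivative_eq_zero.mp hb') hb.ne'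

theorem natDegree_lt_and_eq_of_sq_eq_cube_add {R : Type*} [CommRing R] [NoZeroDivisors R]
    {p r g : R[X]} (h : r ^ 2 = p ^ 3 + g) (hodd : Odd g.natDegree) (h3 : ¬ 3 ∣ g.natDegree) :
    g.natDegree < 3 * p.natDegree ∧ 2 * r.natDegree = 3 * p.natDegree := by
  have hr := congrArg natDegree h
  rw [natDegree_pow] at hr
  rcases lt_trichotomy (3 * p.natDegree) g.natDegree with hlt | heq | hgt
  · rw [natDegree_add_eq_right_of_natDegree_lt (by rwa [natDegree_pow])] at hr
    exact absurd ⟨r.natDegree, by omega⟩ (Nat.not_even_iff_odd.mpr hodd)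
  · exact absurd ⟨p.natDegree, heq.symm⟩ h3
  · rw [natDegree_add_eq_left_of_natDegree_lt (by rwa [natDegree_pow]), natDegree_pow] at hr
    exact ⟨hgt, hr⟩

section

variable {R : Type*} [CommRing R]

theorem X_sub_one_ne_zero [Nontrivial R] : (X - 1 : R[X]) ≠ 0 := by
  simpa using X_sub_C_ne_zero (1 : R)

theorem natDegree_X_sub_one [Nontrivial R] : (X - 1 : R[X]).natDegree = 1 := by
  simpa using natDegree_X_sub_C (1 : R)

theorem prime_X_sub_one [IsDomain R] : Prime (X - 1 : R[X]) := by
  simpa using prime_X_sub_C (1 : R)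

theorem isCoprime_X_X_sub_one : IsCoprime (X : R[X]) (X - 1) :=
  ⟨1, -1, by ring⟩

end

section

variable {K : Type*} [Field K] [CharZero K] {p B r : K[X]}

theorem sq_ne_cube_add_of_not_X_sub_one_dvd (hB : B ≠ 0) (hpB : IsCoprime p B) (hX : ¬ X ∣ p)
    (hX1 : ¬ X - 1 ∣ p) (hdeg : 7 + 6 * B.natDegree < 3 * p.natDegree)
    (hr : 2 * r.natDegree = 3 * p.natDegree) :
    r ^ 2 ≠ p ^ 3 + X ^ 5 * (X - 1) ^ 2 * B ^ 6 := by
  intro h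
  have hp : p ≠ 0 := by rintro rfl; simp at hdeg
  have hr0 : r ≠ 0 := by rintro rfl; rw [natDegree_zero] at hr; omega
  have hcop : IsCoprime (p ^ 3) (X ^ 5 * (X - 1) ^ 2 * B ^ 6) :=
    ((((prime_X.coprime_iff_not_dvd.mpr hX).symm.pow_right).mul_right
      (prime_X_sub_one.coprime_iff_not_dvd.mpr hX1).symm.pow_right).mul_right hpB.pow_right).pow_left
  have hM : (X * (X - 1) * p * B * r).natDegree = 2 + p.natDegree + B.natDegree + r.natDegree := by
    simp [natDegree_mul, hp, hB, hr0, X_sub_one_ne_zero, natDegree_X_sub_one]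
  have hlt := natDegree_lt_of_add_eq_of_dvd_pow (M := X * (X - 1) * p * B * r) (n := 6)
    (pow_ne_zero 3 hp) (pow_ne_zero 2 hr0) (by simp [hp, hB, hr0, X_sub_one_ne_zero])
    (by simp [natDegree_mul, hB, X_sub_one_ne_zero, natDegree_X_sub_one]) hcop h.symm
    ⟨X * (X - 1) ^ 4 * p ^ 3 * r ^ 4, by ring⟩
  rw [natDegree_pow, hM] at hlt
  omega

theorem sq_ne_cube_add_of_X_sub_one_dvd (hB : B ≠ 0) (hpB : IsCoprime p B) (hX : ¬ X ∣ p)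
    (hX1 : X - 1 ∣ p) (hdeg : 7 + 6 * B.natDegree < 3 * p.natDegree)
    (hr : 2 * r.natDegree = 3 * p.natDegree) :
    r ^ 2 ≠ p ^ 3 + X ^ 5 * (X - 1) ^ 2 * B ^ 6 := by
  intro h
  obtain ⟨p, rfl⟩ := hX1
  obtain ⟨r, rfl⟩ : X - 1 ∣ r := prime_X_sub_one.dvd_of_dvd_pow (n := 2)
    ⟨(X - 1) ^ 2 * p ^ 3 + X ^ 5 * (X - 1) * B ^ 6, by linear_combination h⟩
  have h' : r ^ 2 = (X - 1) * p ^ 3 + X ^ 5 * B ^ 6 :=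
    mul_left_cancel₀ (pow_ne_zero 2 X_sub_one_ne_zero) (by linear_combination h)
  have hp : p ≠ 0 := by rintro rfl; simp at hdeg
  have hr0 : r ≠ 0 := by rintro rfl; rw [mul_zero, natDegree_zero] at hr; omega
  have hpX : IsCoprime p X := (prime_X.coprime_iff_not_dvd.mpr (hX ∘ (·.mul_left _))).symm
  have hcop : IsCoprime ((X - 1) * p ^ 3) (X ^ 5 * B ^ 6) :=
    (isCoprime_X_X_sub_one.symm.pow_right.mul_right hpB.of_mul_left_left.pow_right).mul_left
      (hpX.pow_right.mul_right hpB.of_mul_left_right.pow_right).pow_left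
  have hM : (X * (X - 1) * p * B * r).natDegree = 2 + p.natDegree + B.natDegree + r.natDegree := by
    simp [natDegree_mul, hp, hB, hr0, X_sub_one_ne_zero, natDegree_X_sub_one]
  have hlt := natDegree_lt_of_add_eq_of_dvd_pow (M := X * (X - 1) * p * B * r) (n := 6)
    (mul_ne_zero X_sub_one_ne_zero (pow_ne_zero 3 hp)) (pow_ne_zero 2 hr0)
    (by simp [hp, hB, hr0, X_sub_one_ne_zero]) (by simp [natDegree_mul, hB]) hcop h'.symm
    ⟨X * (X - 1) ^ 5 * p ^ 3 * r ^ 4, by ring⟩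
  rw [natDegree_mul X_sub_one_ne_zero (pow_ne_zero 3 hp), natDegree_pow, hM] at hlt
  rw [natDegree_mul X_sub_one_ne_zero hp] at hdeg hr
  rw [natDegree_mul X_sub_one_ne_zero hr0] at hr
  rw [natDegree_X_sub_one] at hlt hdeg hr
  omega

theorem sq_ne_cube_add_X_pow_five_mul_X_sub_one_sq_mul (hB : B ≠ 0) (hpB : IsCoprime p B) :
    r ^ 2 ≠ p ^ 3 + X ^ 5 * (X - 1) ^ 2 * B ^ 6 := by
  intro h
  have hg : (X ^ 5 * (X - 1) ^ 2 * B ^ 6 : K[X]).natDegree = 7 + 6 * B.natDegree := by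
    simp [natDegree_mul, hB, X_sub_one_ne_zero, natDegree_X_sub_one]
  obtain ⟨hdeg, hr⟩ := natDegree_lt_and_eq_of_sq_eq_cube_add h
    (by rw [hg]; exact ⟨3 * B.natDegree + 3, by ring⟩) (by rw [hg]; omega)
  rw [hg] at hdeg
  have hX : ¬ X ∣ p := by
    intro hXp
    have hXB : ¬ X ∣ B := fun hXB => not_isUnit_X (hpB.isUnit_of_dvd' hXp hXB)
    rcases prime_X.dvd_or_dvd (prime_X.dvd_of_sq_eq_cube_add_pow_five_mul
      (by linear_combination h : r ^ 2 = p ^ 3 + X ^ 5 * ((X - 1) ^ 2 * B ^ 6)) hXp) with hX1 | hB6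
    · exact (by simp [X_dvd_iff] : ¬ (X : K[X]) ∣ X - 1) (prime_X.dvd_of_dvd_pow hX1)
    · exact hXB (prime_X.dvd_of_dvd_pow hB6)
  by_cases hX1 : X - 1 ∣ p
  · exact sq_ne_cube_add_of_X_sub_one_dvd hB hpB hX hX1 hdeg hr h
  · exact sq_ne_cube_add_of_not_X_sub_one_dvd hB hpB hX hX1 hdeg hr h

end

end Polynomial

/-- The Mordell-Weil group of Fibration 1 on the singular K3 surface `X₃` is
trivial: the point at infinity `O` is the only `ℂ(u)`-rational point of the
elliptic curve `Y² = X³ + u⁵(u − 1)²`. -/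
theorem fibration1_mordell_weil :
    ∀ P : W1.Point, P = 0 := by
  rintro (_ | @⟨x, y, hxy⟩)
  · rfl
  · have hcurve : y ^ 2 = x ^ 3 + algebraMap ℂ[X] (RatFunc ℂ) (X ^ 5 * (X - 1) ^ 2) := by
      simpa [W1, uu] using (Affine.equation_iff x y).mp hxy.left
    obtain ⟨p, B, r, hB, hpB, h⟩ := RatFunc.exists_coprime_of_sq_eq_cube_add hcurve
    exact (sq_ne_cube_add_X_pow_five_mul_X_sub_one_sq_mul hB hpB h).elim
end
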